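/- For every fixed n ≥ 3 (and finite eighth moments), Var[m_n] = (q₀ β_n² + q₁ E[d_n²] − q₂ E[m_n²])/(1 − q₁ − q₂), where q₀ = (n−2)/(p_n(n−1)), q₁ = 1/(p_n(n−1)), and q₂ = (p_n−1)/(p_n(n−1)) (note 1 − q₁ − q₂ = (n−2)/(n−1) > 0). -/

import Mathlib

open MeasureTheory ProbabilityTheory Matrix Filter
open scoped Topology

noncomputable section

namespace LW

variable {Ω : Type*} [MeasurableSpace Ω]

/-- The Borel/product measurable structure on matrices. -/
instance {pn n : ℕ} : MeasurableSpace (Matrix (Fin pn) (Fin n) ℝ) :=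
  inferInstanceAs (MeasurableSpace (Fin pn → Fin n → ℝ))

/-- Normalized Frobenius inner product `⟨A,B⟩ₙ = tr(A Bᵀ)/p`. -/
def inp {pn : ℕ} (A B : Matrix (Fin pn) (Fin pn) ℝ) : ℝ :=
  (A * Bᵀ).trace / pn

/-- Normalized Frobenius norm `‖A‖ₙ = √(tr(A Aᵀ)/p)`. -/
def nrm {pn : ℕ} (A : Matrix (Fin pn) (Fin pn) ℝ) : ℝ :=
  Real.sqrt ((A * Aᵀ).trace / pn)

/-- Column-centered data matrix `x̃_{·k} = x_{·k} - (1/n) ∑_{k'} x_{·k'}`. -/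
def ctr {pn n : ℕ} (X : Matrix (Fin pn) (Fin n) ℝ) : Matrix (Fin pn) (Fin n) ℝ :=
  Matrix.of fun i k => X i k - (∑ k', X i k') / n

/-- Sample covariance `S = X̃ X̃ᵀ/(n-1)`. -/
def sampleCov {pn n : ℕ} (X : Matrix (Fin pn) (Fin n) ℝ) : Matrix (Fin pn) (Fin pn) ℝ :=
  ((n : ℝ) - 1)⁻¹ • (ctr X * (ctr X)ᵀ)

/-- Centered outer product `x̃_{·k} x̃_{·k}ᵀ`. -/
def outerC {pn n : ℕ} (X : Matrix (Fin pn) (Fin n) ℝ) (k : Fin n) :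
    Matrix (Fin pn) (Fin pn) ℝ :=
  Matrix.of fun i j => ctr X i k * ctr X j k

/-- Covariance of two real random variables. -/
def covP (P : Measure Ω) (f g : Ω → ℝ) : ℝ :=
  (∫ ω, f ω * g ω ∂P) - (∫ ω, f ω ∂P) * (∫ ω, g ω ∂P)

/-- Variance `Var[f] = E[(f - E f)²]`. -/
def varP (P : Measure Ω) (f : Ω → ℝ) : ℝ :=
  ∫ ω, (f ω - ∫ ω', f ω' ∂P) ^ 2 ∂P

/-- `μₙ = ⟨Σ, I⟩ₙ`. -/
def muS {pn : ℕ} (Sig : Matrix (Fin pn) (Fin pn) ℝ) : ℝ := inp Sig 1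

/-- `αₙ² = ‖Σ − μ I‖ₙ²`. -/
def alpha2 {pn : ℕ} (Sig : Matrix (Fin pn) (Fin pn) ℝ) : ℝ := nrm (Sig - muS Sig • 1) ^ 2

/-- `βₙ² = E[‖S − Σ‖ₙ²]`. -/
def beta2 (P : Measure Ω) {pn n : ℕ} (X : Ω → Matrix (Fin pn) (Fin n) ℝ)
    (Sig : Matrix (Fin pn) (Fin pn) ℝ) : ℝ :=
  ∫ ω, nrm (sampleCov (X ω) - Sig) ^ 2 ∂P

/-- `δₙ² = E[‖S − μ I‖ₙ²]`. -/
def delta2 (P : Measure Ω) {pn n : ℕ} (X : Ω → Matrix (Fin pn) (Fin n) ℝ)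
    (Sig : Matrix (Fin pn) (Fin pn) ℝ) : ℝ :=
  ∫ ω, nrm (sampleCov (X ω) - muS Sig • 1) ^ 2 ∂P

/-- `mₙ = ⟨S, I⟩ₙ`. -/
def mE {pn n : ℕ} (X : Ω → Matrix (Fin pn) (Fin n) ℝ) (ω : Ω) : ℝ :=
  inp (sampleCov (X ω)) 1

/-- `dₙ² = ‖S − mₙ I‖ₙ²`. -/
def d2E {pn n : ℕ} (X : Ω → Matrix (Fin pn) (Fin n) ℝ) (ω : Ω) : ℝ :=
  nrm (sampleCov (X ω) - mE X ω • 1) ^ 2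

/-- `b̄ₙ² = (1/n²) ∑ₖ ‖(n/(n−1)) x̃ₖ x̃ₖᵀ − S‖ₙ²`. -/
def bbar2E {pn n : ℕ} (X : Ω → Matrix (Fin pn) (Fin n) ℝ) (ω : Ω) : ℝ :=
  (1 / (n : ℝ) ^ 2) *
    ∑ k : Fin n, nrm (((n : ℝ) / ((n : ℝ) - 1)) • outerC (X ω) k - sampleCov (X ω)) ^ 2

def gammaC (n : ℕ) : ℝ := ((n : ℝ) * ((n : ℝ) - 1)) / ((n : ℝ) ^ 2 - 3 * (n : ℝ) + 3)
def lambdaC (n : ℕ) : ℝ :=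
  ((n : ℝ) ^ 2 * ((n : ℝ) - 2)) / (((n : ℝ) - 1) * ((n : ℝ) ^ 2 - 3 * (n : ℝ) + 3))
def c0 (n : ℕ) : ℝ := 1 / gammaC n - 1 / (n : ℝ) - lambdaC n / (gammaC n * (n : ℝ) ^ 2)
def c1 (n : ℕ) : ℝ := lambdaC n / (gammaC n * (n : ℝ) ^ 2)
def c2 (pn n : ℕ) : ℝ := ((pn : ℝ) + 1) * c1 n
def q0 (pn n : ℕ) : ℝ := ((n : ℝ) - 2) / ((pn : ℝ) * ((n : ℝ) - 1))
def q1 (pn n : ℕ) : ℝ := 1 / ((pn : ℝ) * ((n : ℝ) - 1))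
def q2 (pn n : ℕ) : ℝ := ((pn : ℝ) - 1) / ((pn : ℝ) * ((n : ℝ) - 1))
def c0f (pn n : ℕ) : ℝ := c0 n + (c1 n - c2 pn n) * q0 pn n / (1 - q1 pn n - q2 pn n)
def c1f (pn n : ℕ) : ℝ := c1 n + (c1 n - c2 pn n) * q1 pn n / (1 - q1 pn n - q2 pn n)
def c2f (pn n : ℕ) : ℝ := c2 pn n - (c1 n - c2 pn n) * q2 pn n / (1 - q1 pn n - q2 pn n)

/-- `bₙ² = (b̄ₙ² − c₁^f dₙ² − c₂^f mₙ²)/c₀^f`. -/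
def b2E {pn n : ℕ} (X : Ω → Matrix (Fin pn) (Fin n) ℝ) (ω : Ω) : ℝ :=
  (bbar2E X ω - c1f pn n * d2E X ω - c2f pn n * (mE X ω) ^ 2) / c0f pn n

/-- `b_{n,u}² = min(max(bₙ², 0), dₙ²)`. -/
def b2uE {pn n : ℕ} (X : Ω → Matrix (Fin pn) (Fin n) ℝ) (ω : Ω) : ℝ :=
  min (max (b2E X ω) 0) (d2E X ω)

/-- `a_{n,u}² = dₙ² − b_{n,u}²`. -/
def a2uE {pn n : ℕ} (X : Ω → Matrix (Fin pn) (Fin n) ℝ) (ω : Ω) : ℝ :=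
  d2E X ω - b2uE X ω

/-- Translation-invariant linear shrinkage estimator `Sₙ*`. -/
def SstarU {pn n : ℕ} (X : Ω → Matrix (Fin pn) (Fin n) ℝ) (ω : Ω) :
    Matrix (Fin pn) (Fin pn) ℝ :=
  (b2uE X ω / d2E X ω) • (mE X ω • (1 : Matrix (Fin pn) (Fin pn) ℝ)) +
    (a2uE X ω / d2E X ω) • sampleCov (X ω)

/-- Oracle `Σₙ* = (βₙ²/δₙ²) μₙ I + (αₙ²/δₙ²) Sₙ`. -/
def SigmaStar (P : Measure Ω) {pn n : ℕ} (X : Ω → Matrix (Fin pn) (Fin n) ℝ)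
    (Sig : Matrix (Fin pn) (Fin pn) ℝ) (ω : Ω) : Matrix (Fin pn) (Fin pn) ℝ :=
  (beta2 P X Sig / delta2 P X Sig) • (muS Sig • (1 : Matrix (Fin pn) (Fin pn) ℝ)) +
    (alpha2 Sig / delta2 P X Sig) • sampleCov (X ω)

/-- `Σₙ** = μₙ I + ((⟨S,Σ⟩ₙ − mₙ μₙ)/dₙ²)(S − mₙ I)`. -/
def SigmaStarStar {pn n : ℕ} (X : Ω → Matrix (Fin pn) (Fin n) ℝ)
    (Sig : Matrix (Fin pn) (Fin pn) ℝ) (ω : Ω) : Matrix (Fin pn) (Fin pn) ℝ :=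
  muS Sig • (1 : Matrix (Fin pn) (Fin pn) ℝ) +
    ((inp (sampleCov (X ω)) Sig - mE X ω * muS Sig) / d2E X ω) •
      (sampleCov (X ω) - mE X ω • 1)

/-- Ledoit–Wolf recommended `b̄_{n,r}² = (1/(n−1)²) ∑ₖ ‖x̃ₖ x̃ₖᵀ − S‖ₙ²`. -/
def bbar2rE {pn n : ℕ} (X : Ω → Matrix (Fin pn) (Fin n) ℝ) (ω : Ω) : ℝ :=
  (1 / ((n : ℝ) - 1) ^ 2) * ∑ k : Fin n, nrm (outerC (X ω) k - sampleCov (X ω)) ^ 2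

def b2rE {pn n : ℕ} (X : Ω → Matrix (Fin pn) (Fin n) ℝ) (ω : Ω) : ℝ :=
  min (max (bbar2rE X ω) 0) (d2E X ω)

def a2rE {pn n : ℕ} (X : Ω → Matrix (Fin pn) (Fin n) ℝ) (ω : Ω) : ℝ :=
  d2E X ω - b2rE X ω

def SstarR {pn n : ℕ} (X : Ω → Matrix (Fin pn) (Fin n) ℝ) (ω : Ω) :
    Matrix (Fin pn) (Fin pn) ℝ :=
  (b2rE X ω / d2E X ω) • (mE X ω • (1 : Matrix (Fin pn) (Fin pn) ℝ)) +
    (a2rE X ω / d2E X ω) • sampleCov (X ω)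

def b2mE {pn n : ℕ} (X : Ω → Matrix (Fin pn) (Fin n) ℝ) (ω : Ω) : ℝ :=
  min (max (bbar2E X ω) 0) (d2E X ω)

def a2mE {pn n : ℕ} (X : Ω → Matrix (Fin pn) (Fin n) ℝ) (ω : Ω) : ℝ :=
  d2E X ω - b2mE X ω

def SstarM {pn n : ℕ} (X : Ω → Matrix (Fin pn) (Fin n) ℝ) (ω : Ω) :
    Matrix (Fin pn) (Fin pn) ℝ :=
  (b2mE X ω / d2E X ω) • (mE X ω • (1 : Matrix (Fin pn) (Fin pn) ℝ)) +
    (a2mE X ω / d2E X ω) • sampleCov (X ω)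

def mSE {pn n : ℕ} (X : Ω → Matrix (Fin pn) (Fin n) ℝ) (ω : Ω) : ℝ :=
  (((n : ℝ) - 1) / n) * mE X ω

def a2sE {pn n : ℕ} (X : Ω → Matrix (Fin pn) (Fin n) ℝ) (ω : Ω) : ℝ :=
  (((n : ℝ) - 1) / n) * (d2E X ω - b2mE X ω)

def SstarS {pn n : ℕ} (X : Ω → Matrix (Fin pn) (Fin n) ℝ) (ω : Ω) :
    Matrix (Fin pn) (Fin pn) ℝ :=
  (((n : ℝ) - 1) / n) • SstarM X ω

/-- The quantity in Assumption 3: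
`(pₙ²/n) · (∑_{(i,j,k,l)∈Qₙ} Cov[y_{i1}y_{j1}, y_{k1}y_{l1}]²) / |Qₙ|`. -/
def A3quant (P : Measure Ω) (p : ℕ → ℕ) (Γ : ∀ n, Matrix (Fin (p n)) (Fin (p n)) ℝ)
    (X : ∀ n, Ω → Matrix (Fin (p n)) (Fin n) ℝ) (n : ℕ) : ℝ :=
  if hn : 0 < n then
    (let y : Fin (p n) → Ω → ℝ := fun i ω => ((Γ n)ᵀ * X n ω) i ⟨0, hn⟩
     let Q : Finset (Fin (p n) × Fin (p n) × Fin (p n) × Fin (p n)) :=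
       Finset.univ.filter fun q =>
         q.1 ≠ q.2.1 ∧ q.1 ≠ q.2.2.1 ∧ q.1 ≠ q.2.2.2 ∧
           q.2.1 ≠ q.2.2.1 ∧ q.2.1 ≠ q.2.2.2 ∧ q.2.2.1 ≠ q.2.2.2
     ((p n : ℝ) ^ 2 / n) *
       ((∑ q ∈ Q, (covP P (fun ω => y q.1 ω * y q.2.1 ω)
           (fun ω => y q.2.2.1 ω * y q.2.2.2 ω)) ^ 2) / Q.card))
  else 0

/-- `θₙ² = Var[(1/pₙ) ∑ᵢ y_{i1}²]`. -/
def theta2 (P : Measure Ω) (p : ℕ → ℕ) (Γ : ∀ n, Matrix (Fin (p n)) (Fin (p n)) ℝ)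
    (X : ∀ n, Ω → Matrix (Fin (p n)) (Fin n) ℝ) (n : ℕ) : ℝ :=
  if hn : 0 < n then
    varP P (fun ω => (∑ i, (((Γ n)ᵀ * X n ω) i ⟨0, hn⟩) ^ 2) / p n)
  else 0

set_option linter.unusedSectionVars false

section Aux

open scoped ENNReal

variable {Ω : Type*} [MeasurableSpace Ω] {P : Measure Ω} [IsProbabilityMeasure P]

lemma enn48 : (1:ℝ≥0∞)/4 = 1/8 + 1/8 := by
  have h8 : (8:ℝ≥0∞) = 2 * 4 := by norm_num
  simp only [one_div]
  rw [h8, ENNReal.mul_inv (by norm_num) (by norm_num), ← two_mul, ← mul_assoc,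
    ENNReal.mul_inv_cancel (by norm_num) (by norm_num), one_mul]

lemma enn24 : (1:ℝ≥0∞)/2 = 1/4 + 1/4 := by
  have h4 : (4:ℝ≥0∞) = 2 * 2 := by norm_num
  simp only [one_div]
  rw [h4, ENNReal.mul_inv (by norm_num) (by norm_num), ← two_mul, ← mul_assoc,
    ENNReal.mul_inv_cancel (by norm_num) (by norm_num), one_mul]

lemma enn12 : (1:ℝ≥0∞)/1 = 1/2 + 1/2 := by
  simp only [one_div, inv_one]
  rw [← two_mul, ENNReal.mul_inv_cancel (by norm_num) (by norm_num)]

lemma memLp_mul {f g : Ω → ℝ} {p q r : ℝ≥0∞} (hf : MemLp f q P) (hg : MemLp g r P)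
    (h : 1/p = 1/q + 1/r) : MemLp (fun ω => f ω * g ω) p P := by
  haveI : ENNReal.HolderTriple q r p := ⟨by simpa [one_div] using h.symm⟩
  exact MemLp.smul (φ := f) hg hf

lemma memLp_mul44 {f g : Ω → ℝ} (hf : MemLp f 4 P) (hg : MemLp g 4 P) :
    MemLp (fun ω => f ω * g ω) 2 P := memLp_mul hf hg enn24

lemma memLp_mul88 {f g : Ω → ℝ} (hf : MemLp f 8 P) (hg : MemLp g 8 P) :
    MemLp (fun ω => f ω * g ω) 4 P := memLp_mul hf hg enn48

lemma integrable_mul22 {f g : Ω → ℝ} (hf : MemLp f 2 P) (hg : MemLp g 2 P) :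
    Integrable (fun ω => f ω * g ω) P :=
  (memLp_mul hf hg enn12).integrable le_rfl

end Aux
section Aux2

variable {pn n : ℕ}

lemma trace_mul_transpose (A B : Matrix (Fin pn) (Fin pn) ℝ) :
    (A * Bᵀ).trace = ∑ i, ∑ j, A i j * B i j := by
  simp [Matrix.trace, Matrix.mul_apply, Matrix.diag, Matrix.transpose_apply]

lemma nrm_sq (A : Matrix (Fin pn) (Fin pn) ℝ) :
    nrm A ^ 2 = (∑ i, ∑ j, (A i j) ^ 2) / pn := by
  rw [nrm, Real.sq_sqrt, trace_mul_transpose]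
  · congr 1; exact Finset.sum_congr rfl fun i _ => Finset.sum_congr rfl fun j _ => (sq _).symm
  · rw [trace_mul_transpose]
    apply div_nonneg _ (Nat.cast_nonneg _)
    exact Finset.sum_nonneg fun i _ => Finset.sum_nonneg fun j _ => mul_self_nonneg _

lemma inp_one (A : Matrix (Fin pn) (Fin pn) ℝ) : inp A 1 = (∑ i, A i i) / pn := by
  simp [inp, Matrix.trace, Matrix.diag, Matrix.mul_apply, Matrix.one_apply,
    Finset.mul_sum, Finset.sum_ite_eq']

lemma sub_smul_one_apply (S : Matrix (Fin pn) (Fin pn) ℝ) (c : ℝ) (i j : Fin pn) :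
    (S - c • (1 : Matrix (Fin pn) (Fin pn) ℝ)) i j = S i j - c * (if i = j then 1 else 0) := by
  simp [Matrix.sub_apply, Matrix.smul_apply, Matrix.one_apply]

lemma sum_sub_diag_sq (S : Matrix (Fin pn) (Fin pn) ℝ) (c : ℝ) :
    (∑ i, ∑ j, (S i j - c * (if i = j then 1 else 0)) ^ 2)
      = (∑ i, ∑ j, S i j ^ 2) - 2 * c * (∑ i, S i i) + pn * c ^ 2 := by
  have h1 : ∀ i j : Fin pn, (S i j - c * (if i = j then 1 else 0)) ^ 2
      = S i j ^ 2 - 2 * c * (if i = j then S i j else 0) + c ^ 2 * (if i = j then 1 else 0) := by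
    intro i j; by_cases h : i = j <;> simp [h] <;> ring
  simp only [h1, Finset.sum_add_distrib, Finset.sum_sub_distrib, ← Finset.mul_sum,
    Finset.sum_ite_eq, Finset.mem_univ, if_true]
  simp [Finset.card_univ, mul_comm]

lemma sampleCov_entry (hn : (n : ℝ) ≠ 0) (M : Matrix (Fin pn) (Fin n) ℝ) (a b : Fin pn) :
    sampleCov M a b = ((n : ℝ) - 1)⁻¹ *
      ((∑ k, M a k * M b k) - (∑ k, M a k) * (∑ k, M b k) / n) := by
  have hctr : ∀ (i : Fin pn) (k : Fin n), ctr M i k = M i k - (∑ k', M i k') / n := fun i k => rfl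
  have : (ctr M * (ctr M)ᵀ) a b = ∑ k, ctr M a k * ctr M b k := by
    simp [Matrix.mul_apply, Matrix.transpose_apply]
  rw [sampleCov, Matrix.smul_apply, this]
  congr 1
  have expand : ∀ k : Fin n, ctr M a k * ctr M b k
      = M a k * M b k - ((∑ k', M b k') / n) * M a k - ((∑ k', M a k') / n) * M b k
        + ((∑ k', M a k') / n) * ((∑ k', M b k') / n) := by
    intro k; rw [hctr, hctr]; ring
  rw [Finset.sum_congr rfl fun k _ => expand k]
  simp only [Finset.sum_add_distrib, Finset.sum_sub_distrib, ← Finset.mul_sum,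
    Finset.sum_const, Finset.card_univ, Fintype.card_fin, nsmul_eq_mul]
  field_simp
  ring

end Aux2
section Aux3

open scoped ENNReal

variable {Ω : Type*} [MeasurableSpace Ω] {P : Measure Ω} [IsProbabilityMeasure P]
  {n pn : ℕ} {X : Ω → Matrix (Fin pn) (Fin n) ℝ}

lemma meas_entry (hmeas : Measurable X) (a : Fin pn) (k : Fin n) :
    Measurable (fun ω => X ω a k) :=
  (measurable_pi_apply k).comp ((measurable_pi_apply a).comp hmeas)

lemma meas_col (hmeas : Measurable X) (k : Fin n) :
    Measurable (fun ω (i : Fin pn) => X ω i k) :=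
  measurable_pi_lambda _ fun i => meas_entry hmeas i k

/-- Factorization of the integral of a product of functions of two distinct columns. -/
lemma indep_mul_int
    (hindep : iIndepFun (fun (k : Fin n) ω (i : Fin pn) => X ω i k) P)
    {k m : Fin n} (hkm : k ≠ m) {φ ψ : (Fin pn → ℝ) → ℝ}
    (hφ : Measurable φ) (hψ : Measurable ψ)
    (h1 : Integrable (fun ω => φ (fun i => X ω i k)) P)
    (h2 : Integrable (fun ω => ψ (fun i => X ω i m)) P) :
    ∫ ω, φ (fun i => X ω i k) * ψ (fun i => X ω i m) ∂P
      = (∫ ω, φ (fun i => X ω i k) ∂P) * ∫ ω, ψ (fun i => X ω i m) ∂P :=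
  ((hindep.indepFun hkm).comp hφ hψ).integral_fun_mul_eq_mul_integral h1.aestronglyMeasurable h2.aestronglyMeasurable

/-- Factorization: function of two columns times function of a third column. -/
lemma indep_pair_mul_int (hmeas : Measurable X)
    (hindep : iIndepFun (fun (k : Fin n) ω (i : Fin pn) => X ω i k) P)
    {k m r : Fin n} (hkr : k ≠ r) (hmr : m ≠ r)
    {φ : (Fin pn → ℝ) × (Fin pn → ℝ) → ℝ} {ψ : (Fin pn → ℝ) → ℝ}
    (hφ : Measurable φ) (hψ : Measurable ψ)
    (h1 : Integrable (fun ω => φ (fun i => X ω i k, fun i => X ω i m)) P)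
    (h2 : Integrable (fun ω => ψ (fun i => X ω i r)) P) :
    ∫ ω, φ (fun i => X ω i k, fun i => X ω i m) * ψ (fun i => X ω i r) ∂P
      = (∫ ω, φ (fun i => X ω i k, fun i => X ω i m) ∂P) * ∫ ω, ψ (fun i => X ω i r) ∂P :=
  ((hindep.indepFun_prodMk (fun j => meas_col hmeas j) k m r hkr hmr).comp hφ
    hψ).integral_fun_mul_eq_mul_integral h1.aestronglyMeasurable h2.aestronglyMeasurable

variable (hL8 : ∀ (i : Fin pn) (k : Fin n), MemLp (fun ω => X ω i k) 8 P)

include hL8 in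
lemma memLp8_entry (a : Fin pn) (k : Fin n) : MemLp (fun ω => X ω a k) 8 P := hL8 a k

include hL8 in
lemma memLp4_prod2 (a b : Fin pn) (k l : Fin n) :
    MemLp (fun ω => X ω a k * X ω b l) 4 P := memLp_mul88 (hL8 a k) (hL8 b l)

include hL8 in
lemma int_prod2 (a b : Fin pn) (k l : Fin n) :
    Integrable (fun ω => X ω a k * X ω b l) P :=
  (memLp4_prod2 hL8 a b k l).integrable (by norm_num)

include hL8 in
lemma memLp2_prod3 (a b c : Fin pn) (k l m : Fin n) :
    MemLp (fun ω => X ω a k * X ω b l * X ω c m) 2 P :=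
  memLp_mul44 (memLp4_prod2 hL8 a b k l) ((hL8 c m).mono_exponent (by norm_num))

include hL8 in
lemma int_prod3 (a b c : Fin pn) (k l m : Fin n) :
    Integrable (fun ω => X ω a k * X ω b l * X ω c m) P :=
  (memLp2_prod3 hL8 a b c k l m).integrable (by norm_num)

include hL8 in
lemma int_prod4 (a b c d : Fin pn) (k l m r : Fin n) :
    Integrable (fun ω => X ω a k * X ω b l * X ω c m * X ω d r) P :=
  integrable_mul22 (memLp2_prod3 hL8 a b c k l m)
    ((hL8 d r).mono_exponent (by norm_num))

include hL8 in
lemma int_entry (a : Fin pn) (k : Fin n) : Integrable (fun ω => X ω a k) P :=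
  (hL8 a k).integrable (by norm_num)

include hL8 in
lemma memLp8_sum (a : Fin pn) : MemLp (fun ω => ∑ k, X ω a k) 8 P := by
  have := memLp_finset_sum (μ := P) (f := fun (k : Fin n) ω => X ω a k) Finset.univ
    (fun k _ => hL8 a k)
  simpa using this

include hL8 in
lemma memLp4_R (a b : Fin pn) : MemLp (fun ω => ∑ k, X ω a k * X ω b k) 4 P := by
  have := memLp_finset_sum (μ := P) (f := fun (k : Fin n) ω => X ω a k * X ω b k) Finset.univ
    (fun k _ => memLp4_prod2 hL8 a b k k)
  simpa using this

include hL8 in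
lemma memLp4_S (hn : (n : ℝ) ≠ 0) (a b : Fin pn) :
    MemLp (fun ω => sampleCov (X ω) a b) 4 P := by
  have heq : (fun ω => sampleCov (X ω) a b)
      = fun ω => ((n : ℝ) - 1)⁻¹ *
        ((∑ k, X ω a k * X ω b k) - (∑ k, X ω a k) * (∑ k, X ω b k) * (n : ℝ)⁻¹) := by
    funext ω; rw [sampleCov_entry hn]; ring
  rw [heq]
  apply MemLp.const_mul
  apply MemLp.sub (memLp4_R hL8 a b)
  have h2 : MemLp (fun ω => (∑ k, X ω a k) * (∑ k, X ω b k)) 4 P :=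
    memLp_mul88 (memLp8_sum hL8 a) (memLp8_sum hL8 b)
  simpa [mul_comm] using h2.const_mul ((n : ℝ)⁻¹)

end Aux3
section Aux4

variable {n : ℕ}

lemma sum_ite_single {α : Type*} [Fintype α] [DecidableEq α] (m : α) (v : α → ℝ) :
    (∑ r, if m = r then v r else 0) = v m := by simp

lemma sum_ite_diag (F : Fin n → ℝ) (c : ℝ) :
    (∑ k, ∑ m, if k = m then F k else c)
      = (∑ k, F k) + ((n : ℝ) * ((n : ℝ) - 1)) * c := by
  have per : ∀ k : Fin n, (∑ m, if k = m then F k else c) = F k + ((n : ℝ) - 1) * c := by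
    intro k
    have h : ∀ m : Fin n, (if k = m then F k else c)
        = (if k = m then F k - c else 0) + c := by
      intro m; by_cases h : k = m <;> simp [h]
    simp only [h, Finset.sum_add_distrib, Finset.sum_ite_eq, Finset.mem_univ, if_true,
      Finset.sum_const, Finset.card_univ, Fintype.card_fin, nsmul_eq_mul]
    ring
  simp only [per, Finset.sum_add_distrib, Finset.sum_const, Finset.card_univ,
    Fintype.card_fin, nsmul_eq_mul]
  ring

lemma L3a (F G H : Fin n → ℝ) :
    (∑ k, ∑ m, ∑ r, F k * (G m * H r)) = (∑ k, F k) * ((∑ m, G m) * (∑ r, H r)) := by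
  rw [Finset.sum_mul_sum Finset.univ Finset.univ G H, Finset.sum_mul]
  refine Finset.sum_congr rfl fun k _ => ?_
  rw [Finset.mul_sum]
  refine Finset.sum_congr rfl fun m _ => ?_
  rw [Finset.mul_sum]

lemma L3b (F G H : Fin n → ℝ) :
    (∑ k, ∑ l, ∑ m, (F k * G l) * H m) = ((∑ k, F k) * (∑ l, G l)) * (∑ m, H m) := by
  rw [Finset.sum_mul_sum Finset.univ Finset.univ F G, Finset.sum_mul]
  refine Finset.sum_congr rfl fun k _ => ?_
  rw [Finset.sum_mul]
  refine Finset.sum_congr rfl fun l _ => ?_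
  rw [Finset.mul_sum]

end Aux4
section Aux5

open scoped ENNReal

variable {Ω : Type*} [MeasurableSpace Ω] {P : Measure Ω} [IsProbabilityMeasure P]
  {n pn : ℕ} {X : Ω → Matrix (Fin pn) (Fin n) ℝ} {Sig : Matrix (Fin pn) (Fin pn) ℝ}

variable (hmeas : Measurable X)
  (hL8 : ∀ (i : Fin pn) (k : Fin n), MemLp (fun ω => X ω i k) 8 P)
  (hmean : ∀ (i : Fin pn) (k : Fin n), ∫ ω, X ω i k ∂P = 0)
  (hcov : ∀ (i j : Fin pn) (k : Fin n), ∫ ω, X ω i k * X ω j k ∂P = Sig i j)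
  (hindep : iIndepFun
    (fun (k : Fin n) (ω : Ω) (i : Fin pn) => X ω i k) P)

include hL8 hmean hindep in
/-- Cross moment of two distinct columns vanishes. -/
lemma mom2_diff (i j : Fin pn) {k m : Fin n} (hkm : k ≠ m) :
    ∫ ω, X ω i k * X ω j m ∂P = 0 := by
  have h := indep_mul_int hindep hkm (φ := fun v => v i) (ψ := fun v => v j)
    (measurable_pi_apply i) (measurable_pi_apply j) (int_entry hL8 i k) (int_entry hL8 j m)
  simpa [hmean] using h

include hL8 hcov hindep in
/-- Product of pair moments on two distinct columns. -/
lemma pairval (i j i' j' : Fin pn) {k m : Fin n} (hkm : k ≠ m) :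
    ∫ ω, (X ω i k * X ω j k) * (X ω i' m * X ω j' m) ∂P = Sig i j * Sig i' j' := by
  have h := indep_mul_int hindep hkm (φ := fun v => v i * v j) (ψ := fun v => v i' * v j')
    ((measurable_pi_apply i).mul (measurable_pi_apply j))
    ((measurable_pi_apply i').mul (measurable_pi_apply j'))
    (int_prod2 hL8 i j k k) (int_prod2 hL8 i' j' m m)
  simpa [hcov] using h

include hL8 hmean hindep in
/-- Three entries on one column times a lone entry on a second column vanishes. -/
lemma z31 (i j l e : Fin pn) {k m : Fin n} (hkm : k ≠ m) :
    ∫ ω, (X ω i k * X ω j k * X ω l k) * X ω e m ∂P = 0 := by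
  have h := indep_mul_int hindep hkm (φ := fun v => v i * v j * v l) (ψ := fun v => v e)
    (((measurable_pi_apply i).mul (measurable_pi_apply j)).mul (measurable_pi_apply l))
    (measurable_pi_apply e)
    (int_prod3 hL8 i j l k k k) (int_entry hL8 e m)
  simpa [hmean] using h

include hmeas hL8 hmean hindep in
/-- Two entries on column `k`, one on column `m`, times a lone entry on `r`, vanishes. -/
lemma zpair (i j l e : Fin pn) {k m r : Fin n} (hkr : k ≠ r) (hmr : m ≠ r) :
    ∫ ω, (X ω i k * X ω j k * X ω l m) * X ω e r ∂P = 0 := by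
  have h := indep_pair_mul_int hmeas hindep hkr hmr
    (φ := fun uv => uv.1 i * uv.1 j * uv.2 l) (ψ := fun w => w e)
    ((((measurable_pi_apply i).comp measurable_fst).mul
        ((measurable_pi_apply j).comp measurable_fst)).mul
      ((measurable_pi_apply l).comp measurable_snd))
    (measurable_pi_apply e)
    (int_prod3 hL8 i j l k k m) (int_entry hL8 e r)
  simpa [hmean] using h

end Aux5
section Aux6

open scoped ENNReal

variable {Ω : Type*} [MeasurableSpace Ω] {P : Measure Ω} [IsProbabilityMeasure P]
  {n pn : ℕ} {X : Ω → Matrix (Fin pn) (Fin n) ℝ} {Sig : Matrix (Fin pn) (Fin pn) ℝ}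

variable (hmeas : Measurable X)
  (hL8 : ∀ (i : Fin pn) (k : Fin n), MemLp (fun ω => X ω i k) 8 P)
  (hmean : ∀ (i : Fin pn) (k : Fin n), ∫ ω, X ω i k ∂P = 0)
  (hcov : ∀ (i j : Fin pn) (k : Fin n), ∫ ω, X ω i k * X ω j k ∂P = Sig i j)
  (hindep : iIndepFun
    (fun (k : Fin n) (ω : Ω) (i : Fin pn) => X ω i k) P)

include hL8 in
lemma int_prod4' (i j l e : Fin pn) (k m r s : Fin n) :
    Integrable (fun ω => (X ω i k * X ω j m) * (X ω l r * X ω e s)) P := by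
  have := int_prod4 hL8 i j l e k m r s
  simpa only [mul_assoc] using this

lemma sum_ite_row {n : ℕ} (k : Fin n) (Fv c : ℝ) :
    (∑ m : Fin n, if k = m then Fv else c) = Fv + ((n : ℝ) - 1) * c := by
  have h : ∀ m : Fin n, (if k = m then Fv else c) = (if k = m then Fv - c else 0) + c := by
    intro m; by_cases h : k = m <;> simp [h]
  simp only [h, Finset.sum_add_distrib, Finset.sum_ite_eq, Finset.mem_univ, if_true,
    Finset.sum_const, Finset.card_univ, Fintype.card_fin, nsmul_eq_mul]
  ring

include hL8 hcov hindep in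
lemma eval_I1 (a b : Fin pn) :
    ∫ ω, (∑ k, X ω a k * X ω a k) * (∑ m, X ω b m * X ω b m) ∂P
      = (∑ k, ∫ ω, (X ω a k * X ω a k) * (X ω b k * X ω b k) ∂P)
        + ((n : ℝ) * ((n : ℝ) - 1)) * (Sig a a * Sig b b) := by
  have hpt : (fun ω => (∑ k, X ω a k * X ω a k) * (∑ m, X ω b m * X ω b m))
      = fun ω => ∑ k, ∑ m, (X ω a k * X ω a k) * (X ω b m * X ω b m) :=
    funext fun ω => Finset.sum_mul_sum _ _ _ _
  rw [hpt, integral_finset_sum _ fun k _ =>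
    integrable_finset_sum _ fun m _ => int_prod4' hL8 a a b b k k m m]
  have hswap : ∀ k : Fin n, ∫ ω, (∑ m, (X ω a k * X ω a k) * (X ω b m * X ω b m)) ∂P
      = ∑ m, ∫ ω, (X ω a k * X ω a k) * (X ω b m * X ω b m) ∂P := fun k =>
    integral_finset_sum _ fun m _ => int_prod4' hL8 a a b b k k m m
  rw [Finset.sum_congr rfl fun k _ => hswap k]
  have hval : ∀ k m : Fin n, ∫ ω, (X ω a k * X ω a k) * (X ω b m * X ω b m) ∂P
      = if k = m then ∫ ω, (X ω a k * X ω a k) * (X ω b k * X ω b k) ∂P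
        else Sig a a * Sig b b := by
    intro k m; by_cases h : k = m
    · subst h; rw [if_pos rfl]
    · rw [if_neg h]; exact pairval hL8 hcov hindep a a b b h
  rw [Finset.sum_congr rfl fun k _ => Finset.sum_congr rfl fun m _ => hval k m]
  exact sum_ite_diag _ _

include hL8 hcov hindep in
lemma eval_I2 (a b : Fin pn) :
    ∫ ω, (∑ k, X ω a k * X ω b k) * (∑ m, X ω a m * X ω b m) ∂P
      = (∑ k, ∫ ω, (X ω a k * X ω a k) * (X ω b k * X ω b k) ∂P)
        + ((n : ℝ) * ((n : ℝ) - 1)) * (Sig a b * Sig a b) := by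
  have hpt : (fun ω => (∑ k, X ω a k * X ω b k) * (∑ m, X ω a m * X ω b m))
      = fun ω => ∑ k, ∑ m, (X ω a k * X ω b k) * (X ω a m * X ω b m) :=
    funext fun ω => Finset.sum_mul_sum _ _ _ _
  rw [hpt, integral_finset_sum _ fun k _ =>
    integrable_finset_sum _ fun m _ => int_prod4' hL8 a b a b k k m m]
  have hswap : ∀ k : Fin n, ∫ ω, (∑ m, (X ω a k * X ω b k) * (X ω a m * X ω b m)) ∂P
      = ∑ m, ∫ ω, (X ω a k * X ω b k) * (X ω a m * X ω b m) ∂P := fun k =>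
    integral_finset_sum _ fun m _ => int_prod4' hL8 a b a b k k m m
  rw [Finset.sum_congr rfl fun k _ => hswap k]
  have hval : ∀ k m : Fin n, ∫ ω, (X ω a k * X ω b k) * (X ω a m * X ω b m) ∂P
      = if k = m then ∫ ω, (X ω a k * X ω a k) * (X ω b k * X ω b k) ∂P
        else Sig a b * Sig a b := by
    intro k m; by_cases h : k = m
    · subst h; rw [if_pos rfl]
      congr 1; funext ω; ring
    · rw [if_neg h]; exact pairval hL8 hcov hindep a b a b h
  rw [Finset.sum_congr rfl fun k _ => Finset.sum_congr rfl fun m _ => hval k m]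
  exact sum_ite_diag _ _

end Aux6
section Aux7

open scoped ENNReal

variable {Ω : Type*} [MeasurableSpace Ω] {P : Measure Ω} [IsProbabilityMeasure P]
  {n pn : ℕ} {X : Ω → Matrix (Fin pn) (Fin n) ℝ} {Sig : Matrix (Fin pn) (Fin pn) ℝ}

variable (hmeas : Measurable X)
  (hL8 : ∀ (i : Fin pn) (k : Fin n), MemLp (fun ω => X ω i k) 8 P)
  (hmean : ∀ (i : Fin pn) (k : Fin n), ∫ ω, X ω i k ∂P = 0)
  (hcov : ∀ (i j : Fin pn) (k : Fin n), ∫ ω, X ω i k * X ω j k ∂P = Sig i j)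
  (hindep : iIndepFun
    (fun (k : Fin n) (ω : Ω) (i : Fin pn) => X ω i k) P)

include hmeas hL8 hmean hcov hindep in
lemma eval_I3 (a b : Fin pn) :
    ∫ ω, (∑ k, ∑ m, ∑ r, (X ω a k * X ω a k) * (X ω b m * X ω b r)) ∂P
      = (∑ k, ∫ ω, (X ω a k * X ω a k) * (X ω b k * X ω b k) ∂P)
        + ((n : ℝ) * ((n : ℝ) - 1)) * (Sig a a * Sig b b) := by
  rw [integral_finset_sum _ fun k _ => integrable_finset_sum _ fun m _ =>
    integrable_finset_sum _ fun r _ => int_prod4' hL8 a a b b k k m r]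
  have hswap : ∀ k : Fin n,
      ∫ ω, (∑ m, ∑ r, (X ω a k * X ω a k) * (X ω b m * X ω b r)) ∂P
        = ∑ m, ∑ r, ∫ ω, (X ω a k * X ω a k) * (X ω b m * X ω b r) ∂P := by
    intro k
    rw [integral_finset_sum _ fun m _ =>
      integrable_finset_sum _ fun r _ => int_prod4' hL8 a a b b k k m r]
    exact Finset.sum_congr rfl fun m _ =>
      integral_finset_sum _ fun r _ => int_prod4' hL8 a a b b k k m r
  rw [Finset.sum_congr rfl fun k _ => hswap k]
  have hval : ∀ k m r : Fin n, ∫ ω, (X ω a k * X ω a k) * (X ω b m * X ω b r) ∂P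
      = if m = r then
          (if k = m then ∫ ω, (X ω a k * X ω a k) * (X ω b k * X ω b k) ∂P
            else Sig a a * Sig b b)
        else 0 := by
    intro k m r
    by_cases hmr : m = r
    · subst hmr; rw [if_pos rfl]
      by_cases hkm : k = m
      · subst hkm; rw [if_pos rfl]
      · rw [if_neg hkm]; exact pairval hL8 hcov hindep a a b b hkm
    · rw [if_neg hmr]
      by_cases hkm : k = m
      · subst hkm
        have he : (fun ω => (X ω a k * X ω a k) * (X ω b k * X ω b r))
            = fun ω => (X ω a k * X ω a k * X ω b k) * X ω b r := funext fun ω => by ring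
        rw [he]; exact z31 hL8 hmean hindep a a b b hmr
      · by_cases hkr : k = r
        · subst hkr
          have he : (fun ω => (X ω a k * X ω a k) * (X ω b m * X ω b k))
              = fun ω => (X ω a k * X ω a k * X ω b k) * X ω b m := funext fun ω => by ring
          rw [he]; exact z31 hL8 hmean hindep a a b b hkm
        · have he : (fun ω => (X ω a k * X ω a k) * (X ω b m * X ω b r))
              = fun ω => (X ω a k * X ω a k * X ω b m) * X ω b r := funext fun ω => by ring
          rw [he]; exact zpair hmeas hL8 hmean hindep a a b b hkr hmr
  rw [Finset.sum_congr rfl fun k _ => Finset.sum_congr rfl fun m _ =>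
    Finset.sum_congr rfl fun r _ => hval k m r]
  have hinner : ∀ k m : Fin n,
      (∑ r, if m = r then
          (if k = m then ∫ ω, (X ω a k * X ω a k) * (X ω b k * X ω b k) ∂P
            else Sig a a * Sig b b) else 0)
        = (if k = m then ∫ ω, (X ω a k * X ω a k) * (X ω b k * X ω b k) ∂P
            else Sig a a * Sig b b) := by
    intro k m; simp
  rw [Finset.sum_congr rfl fun k _ => Finset.sum_congr rfl fun m _ => hinner k m]
  exact sum_ite_diag _ _

include hmeas hL8 hmean hcov hindep in
lemma eval_I4 (a b : Fin pn) :
    ∫ ω, (∑ k, ∑ l, ∑ m, (X ω a k * X ω a l) * (X ω b m * X ω b m)) ∂P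
      = (∑ k, ∫ ω, (X ω a k * X ω a k) * (X ω b k * X ω b k) ∂P)
        + ((n : ℝ) * ((n : ℝ) - 1)) * (Sig a a * Sig b b) := by
  rw [integral_finset_sum _ fun k _ => integrable_finset_sum _ fun l _ =>
    integrable_finset_sum _ fun m _ => int_prod4' hL8 a a b b k l m m]
  have hswap : ∀ k : Fin n,
      ∫ ω, (∑ l, ∑ m, (X ω a k * X ω a l) * (X ω b m * X ω b m)) ∂P
        = ∑ l, ∑ m, ∫ ω, (X ω a k * X ω a l) * (X ω b m * X ω b m) ∂P := by
    intro k
    rw [integral_finset_sum _ fun l _ =>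
      integrable_finset_sum _ fun m _ => int_prod4' hL8 a a b b k l m m]
    exact Finset.sum_congr rfl fun l _ =>
      integral_finset_sum _ fun m _ => int_prod4' hL8 a a b b k l m m
  rw [Finset.sum_congr rfl fun k _ => hswap k]
  have hval : ∀ k l m : Fin n, ∫ ω, (X ω a k * X ω a l) * (X ω b m * X ω b m) ∂P
      = if k = l then
          (if k = m then ∫ ω, (X ω a k * X ω a k) * (X ω b k * X ω b k) ∂P
            else Sig a a * Sig b b)
        else 0 := by
    intro k l m
    by_cases hkl : k = l
    · subst hkl; rw [if_pos rfl]
      by_cases hkm : k = m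
      · subst hkm; rw [if_pos rfl]
      · rw [if_neg hkm]; exact pairval hL8 hcov hindep a a b b hkm
    · rw [if_neg hkl]
      by_cases hmk : m = k
      · subst hmk
        have he : (fun ω => (X ω a m * X ω a l) * (X ω b m * X ω b m))
            = fun ω => (X ω a m * X ω b m * X ω b m) * X ω a l := funext fun ω => by ring
        rw [he]; exact z31 hL8 hmean hindep a b b a hkl
      · by_cases hml : m = l
        · subst hml
          have he : (fun ω => (X ω a k * X ω a m) * (X ω b m * X ω b m))
              = fun ω => (X ω a m * X ω b m * X ω b m) * X ω a k := funext fun ω => by ring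
          rw [he]; exact z31 hL8 hmean hindep a b b a hmk
        · have he : (fun ω => (X ω a k * X ω a l) * (X ω b m * X ω b m))
              = fun ω => (X ω b m * X ω b m * X ω a l) * X ω a k := funext fun ω => by ring
          rw [he]
          exact zpair hmeas hL8 hmean hindep b b a a hmk (fun h => hkl h.symm)
  rw [Finset.sum_congr rfl fun k _ => Finset.sum_congr rfl fun l _ =>
    Finset.sum_congr rfl fun m _ => hval k l m]
  have hinner : ∀ k l : Fin n,
      (∑ m, if k = l then
          (if k = m then ∫ ω, (X ω a k * X ω a k) * (X ω b k * X ω b k) ∂P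
            else Sig a a * Sig b b) else 0)
        = if k = l then
            ((∫ ω, (X ω a k * X ω a k) * (X ω b k * X ω b k) ∂P)
              + ((n : ℝ) - 1) * (Sig a a * Sig b b)) else 0 := by
    intro k l; by_cases h : k = l
    · simp only [if_pos h]; exact sum_ite_row k _ _
    · simp [h]
  rw [Finset.sum_congr rfl fun k _ => Finset.sum_congr rfl fun l _ => hinner k l]
  have houter : ∀ k : Fin n,
      (∑ l, if k = l then
          ((∫ ω, (X ω a k * X ω a k) * (X ω b k * X ω b k) ∂P)
            + ((n : ℝ) - 1) * (Sig a a * Sig b b)) else 0)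
        = (∫ ω, (X ω a k * X ω a k) * (X ω b k * X ω b k) ∂P)
            + ((n : ℝ) - 1) * (Sig a a * Sig b b) := by
    intro k; simp
  rw [Finset.sum_congr rfl fun k _ => houter k]
  simp only [Finset.sum_add_distrib, Finset.sum_const, Finset.card_univ, Fintype.card_fin,
    nsmul_eq_mul]
  ring

include hmeas hL8 hmean hcov hindep in
lemma eval_I5 (a b : Fin pn) :
    ∫ ω, (∑ k, ∑ m, ∑ r, (X ω a k * X ω b m) * (X ω a r * X ω b r)) ∂P
      = (∑ k, ∫ ω, (X ω a k * X ω a k) * (X ω b k * X ω b k) ∂P)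
        + ((n : ℝ) * ((n : ℝ) - 1)) * (Sig a b * Sig a b) := by
  rw [integral_finset_sum _ fun k _ => integrable_finset_sum _ fun m _ =>
    integrable_finset_sum _ fun r _ => int_prod4' hL8 a b a b k m r r]
  have hswap : ∀ k : Fin n,
      ∫ ω, (∑ m, ∑ r, (X ω a k * X ω b m) * (X ω a r * X ω b r)) ∂P
        = ∑ m, ∑ r, ∫ ω, (X ω a k * X ω b m) * (X ω a r * X ω b r) ∂P := by
    intro k
    rw [integral_finset_sum _ fun m _ =>
      integrable_finset_sum _ fun r _ => int_prod4' hL8 a b a b k m r r]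
    exact Finset.sum_congr rfl fun m _ =>
      integral_finset_sum _ fun r _ => int_prod4' hL8 a b a b k m r r
  rw [Finset.sum_congr rfl fun k _ => hswap k]
  have hval : ∀ k m r : Fin n, ∫ ω, (X ω a k * X ω b m) * (X ω a r * X ω b r) ∂P
      = if k = m then
          (if k = r then ∫ ω, (X ω a k * X ω a k) * (X ω b k * X ω b k) ∂P
            else Sig a b * Sig a b)
        else 0 := by
    intro k m r
    by_cases hkm : k = m
    · subst hkm; rw [if_pos rfl]
      by_cases hkr : k = r
      · subst hkr; rw [if_pos rfl]
        congr 1; funext ω; ring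
      · rw [if_neg hkr]; exact pairval hL8 hcov hindep a b a b hkr
    · rw [if_neg hkm]
      by_cases hrk : r = k
      · subst hrk
        have he : (fun ω => (X ω a r * X ω b m) * (X ω a r * X ω b r))
            = fun ω => (X ω a r * X ω a r * X ω b r) * X ω b m := funext fun ω => by ring
        rw [he]; exact z31 hL8 hmean hindep a a b b hkm
      · by_cases hrm : r = m
        · subst hrm
          have he : (fun ω => (X ω a k * X ω b r) * (X ω a r * X ω b r))
              = fun ω => (X ω a r * X ω b r * X ω b r) * X ω a k := funext fun ω => by ring
          rw [he]; exact z31 hL8 hmean hindep a b b a hrk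
        · have he : (fun ω => (X ω a k * X ω b m) * (X ω a r * X ω b r))
              = fun ω => (X ω a r * X ω b r * X ω a k) * X ω b m := funext fun ω => by ring
          rw [he]
          exact zpair hmeas hL8 hmean hindep a b a b hrm (fun h => hkm h)
  rw [Finset.sum_congr rfl fun k _ => Finset.sum_congr rfl fun m _ =>
    Finset.sum_congr rfl fun r _ => hval k m r]
  have hinner : ∀ k m : Fin n,
      (∑ r, if k = m then
          (if k = r then ∫ ω, (X ω a k * X ω a k) * (X ω b k * X ω b k) ∂P
            else Sig a b * Sig a b) else 0)
        = if k = m then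
            ((∫ ω, (X ω a k * X ω a k) * (X ω b k * X ω b k) ∂P)
              + ((n : ℝ) - 1) * (Sig a b * Sig a b)) else 0 := by
    intro k m; by_cases h : k = m
    · simp only [if_pos h]; exact sum_ite_row k _ _
    · simp [h]
  rw [Finset.sum_congr rfl fun k _ => Finset.sum_congr rfl fun m _ => hinner k m]
  have houter : ∀ k : Fin n,
      (∑ m, if k = m then
          ((∫ ω, (X ω a k * X ω a k) * (X ω b k * X ω b k) ∂P)
            + ((n : ℝ) - 1) * (Sig a b * Sig a b)) else 0)
        = (∫ ω, (X ω a k * X ω a k) * (X ω b k * X ω b k) ∂P)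
            + ((n : ℝ) - 1) * (Sig a b * Sig a b) := by
    intro k; simp
  rw [Finset.sum_congr rfl fun k _ => houter k]
  simp only [Finset.sum_add_distrib, Finset.sum_const, Finset.card_univ, Fintype.card_fin,
    nsmul_eq_mul]
  ring

end Aux7
section Aux8

open scoped ENNReal

variable {Ω : Type*} [MeasurableSpace Ω] {P : Measure Ω} [IsProbabilityMeasure P]
  {n pn : ℕ} {X : Ω → Matrix (Fin pn) (Fin n) ℝ} {Sig : Matrix (Fin pn) (Fin pn) ℝ}

variable (hmeas : Measurable X)
  (hL8 : ∀ (i : Fin pn) (k : Fin n), MemLp (fun ω => X ω i k) 8 P)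
  (hmean : ∀ (i : Fin pn) (k : Fin n), ∫ ω, X ω i k ∂P = 0)
  (hcov : ∀ (i j : Fin pn) (k : Fin n), ∫ ω, X ω i k * X ω j k ∂P = Sig i j)
  (hindep : iIndepFun
    (fun (k : Fin n) (ω : Ω) (i : Fin pn) => X ω i k) P)

include hmeas hL8 hmean hcov hindep in
lemma core_ab (hn : 3 ≤ n) (a b : Fin pn) :
    ∫ ω, (sampleCov (X ω) a a * sampleCov (X ω) b b
        - sampleCov (X ω) a b * sampleCov (X ω) a b) ∂P
      = (((n : ℝ) - 2) / ((n : ℝ) - 1)) * (Sig a a * Sig b b - Sig a b * Sig a b) := by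
  have hnR : (3 : ℝ) ≤ (n : ℝ) := by exact_mod_cast hn
  have hn0 : (n : ℝ) ≠ 0 := by linarith
  have hn1 : (n : ℝ) - 1 ≠ 0 := by linarith
  -- the five integrand components
  set f1 : Ω → ℝ := fun ω => (∑ k, X ω a k * X ω a k) * (∑ m, X ω b m * X ω b m) with hf1
  set f2 : Ω → ℝ := fun ω => (∑ k, X ω a k * X ω b k) * (∑ m, X ω a m * X ω b m) with hf2
  set f3 : Ω → ℝ := fun ω => ∑ k, ∑ m, ∑ r, (X ω a k * X ω a k) * (X ω b m * X ω b r)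
    with hf3
  set f4 : Ω → ℝ := fun ω => ∑ k, ∑ l, ∑ m, (X ω a k * X ω a l) * (X ω b m * X ω b m)
    with hf4
  set f5 : Ω → ℝ := fun ω => ∑ k, ∑ m, ∑ r, (X ω a k * X ω b m) * (X ω a r * X ω b r)
    with hf5
  -- product forms of the triple sums
  have hf3' : ∀ ω, f3 ω
      = (∑ k, X ω a k * X ω a k) * ((∑ m, X ω b m) * (∑ r, X ω b r)) := fun ω =>
    L3a _ _ _
  have hf4' : ∀ ω, f4 ω
      = ((∑ k, X ω a k) * (∑ l, X ω a l)) * (∑ m, X ω b m * X ω b m) := fun ω =>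
    L3b _ _ _
  have hf5' : ∀ ω, f5 ω
      = ((∑ k, X ω a k) * (∑ m, X ω b m)) * (∑ r, X ω a r * X ω b r) := fun ω =>
    L3b _ _ _
  -- pointwise identity
  have hpoint : ∀ ω, sampleCov (X ω) a a * sampleCov (X ω) b b
        - sampleCov (X ω) a b * sampleCov (X ω) a b
      = (((n : ℝ) - 1)⁻¹) ^ 2
          * (f1 ω - f2 ω - ((n : ℝ))⁻¹ * (f3 ω + f4 ω - 2 * f5 ω)) := by
    intro ω
    rw [sampleCov_entry hn0, sampleCov_entry hn0, sampleCov_entry hn0, hf1, hf2,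
      hf3' ω, hf4' ω, hf5' ω]
    field_simp
    ring
  rw [integral_congr_ae (Filter.Eventually.of_forall hpoint)]
  -- integrability of the five components
  have memR : ∀ (i j : Fin pn), MemLp (fun ω => ∑ k, X ω i k * X ω j k) 2 P := fun i j =>
    (memLp4_R hL8 i j).mono_exponent (by norm_num)
  have memU : ∀ (i : Fin pn), MemLp (fun ω => ∑ k, X ω i k) 8 P := fun i => memLp8_sum hL8 i
  have memUU : ∀ (i j : Fin pn), MemLp (fun ω => (∑ k, X ω i k) * (∑ l, X ω j l)) 2 P :=
    fun i j => (memLp_mul88 (memU i) (memU j)).mono_exponent (by norm_num)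
  have hi1 : Integrable f1 P := integrable_mul22 (memR a a) (memR b b)
  have hi2 : Integrable f2 P := integrable_mul22 (memR a b) (memR a b)
  have hi3 : Integrable f3 P := by
    have : Integrable (fun ω =>
        (∑ k, X ω a k * X ω a k) * ((∑ m, X ω b m) * (∑ r, X ω b r))) P :=
      integrable_mul22 (memR a a) (memUU b b)
    exact this.congr (Filter.Eventually.of_forall fun ω => (hf3' ω).symm)
  have hi4 : Integrable f4 P := by
    have : Integrable (fun ω =>
        ((∑ k, X ω a k) * (∑ l, X ω a l)) * (∑ m, X ω b m * X ω b m)) P :=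
      integrable_mul22 (memUU a a) (memR b b)
    exact this.congr (Filter.Eventually.of_forall fun ω => (hf4' ω).symm)
  have hi5 : Integrable f5 P := by
    have : Integrable (fun ω =>
        ((∑ k, X ω a k) * (∑ m, X ω b m)) * (∑ r, X ω a r * X ω b r)) P :=
      integrable_mul22 (memUU a b) (memR a b)
    exact this.congr (Filter.Eventually.of_forall fun ω => (hf5' ω).symm)
  -- push the integral through
  rw [integral_const_mul]
  have hi34 : Integrable (fun ω => f3 ω + f4 ω) P := hi3.add hi4
  have hi5' : Integrable (fun ω => 2 * f5 ω) P := hi5.const_mul 2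
  have hi345 : Integrable (fun ω => f3 ω + f4 ω - 2 * f5 ω) P := hi34.sub hi5'
  have hi345' : Integrable (fun ω => ((n : ℝ))⁻¹ * (f3 ω + f4 ω - 2 * f5 ω)) P :=
    hi345.const_mul _
  have hi12 : Integrable (fun ω => f1 ω - f2 ω) P := hi1.sub hi2
  rw [integral_sub hi12 hi345', integral_sub hi1 hi2, integral_const_mul,
    integral_sub hi34 hi5', integral_add hi3 hi4, integral_const_mul]
  rw [hf1, hf2, hf3, hf4, hf5]
  rw [eval_I1 hL8 hcov hindep a b, eval_I2 hL8 hcov hindep a b,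
    eval_I3 hmeas hL8 hmean hcov hindep a b, eval_I4 hmeas hL8 hmean hcov hindep a b,
    eval_I5 hmeas hL8 hmean hcov hindep a b]
  field_simp
  ring

end Aux8
theorem stmt_10
    {Ω : Type*} [MeasurableSpace Ω] (P : Measure Ω) [IsProbabilityMeasure P]
    (n pn : ℕ) (hn : 3 ≤ n) (hpn : 1 ≤ pn)
    (X : Ω → Matrix (Fin pn) (Fin n) ℝ)
    (Sig : Matrix (Fin pn) (Fin pn) ℝ)
    (hmeas : Measurable X)
    (hL8 : ∀ (i : Fin pn) (k : Fin n), MemLp (fun ω => X ω i k) 8 P)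
    (hmean : ∀ (i : Fin pn) (k : Fin n), ∫ ω, X ω i k ∂P = 0)
    (hcov : ∀ (i j : Fin pn) (k : Fin n), ∫ ω, X ω i k * X ω j k ∂P = Sig i j)
    (hindep : iIndepFun
      (fun (k : Fin n) (ω : Ω) (i : Fin pn) => X ω i k) P)
    (hident : ∀ k k' : Fin n,
      IdentDistrib (fun ω (i : Fin pn) => X ω i k)
        (fun ω (i : Fin pn) => X ω i k') P P)
    :
    varP P (mE X)
      = (q0 pn n * beta2 P X Sig + q1 pn n * (∫ ω, d2E X ω ∂P)
          - q2 pn n * (∫ ω, mE X ω ^ 2 ∂P)) / (1 - q1 pn n - q2 pn n) := by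
  classical
  have hnR : (3 : ℝ) ≤ (n : ℝ) := by exact_mod_cast hn
  have hn0 : (n : ℝ) ≠ 0 := by linarith
  have hn1 : (n : ℝ) - 1 ≠ 0 := by linarith
  have hn2 : (n : ℝ) - 2 ≠ 0 := by linarith
  have hpR : (1 : ℝ) ≤ (pn : ℝ) := by exact_mod_cast hpn
  have hp0 : (pn : ℝ) ≠ 0 := by linarith
  -- pointwise form of mE
  have hmE : ∀ ω, mE X ω = (∑ i, sampleCov (X ω) i i) / pn := fun ω => by
    rw [mE, inp_one]
  -- integrability package
  have memS : ∀ a b : Fin pn, MemLp (fun ω => sampleCov (X ω) a b) 4 P := fun a b =>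
    memLp4_S hL8 hn0 a b
  have memS2 : ∀ a b : Fin pn, MemLp (fun ω => sampleCov (X ω) a b) 2 P := fun a b =>
    (memS a b).mono_exponent (by norm_num)
  have intS : ∀ a b : Fin pn, Integrable (fun ω => sampleCov (X ω) a b) P := fun a b =>
    (memS a b).integrable (by norm_num)
  have intSS : ∀ a b c d : Fin pn,
      Integrable (fun ω => sampleCov (X ω) a b * sampleCov (X ω) c d) P := fun a b c d =>
    integrable_mul22 (memS2 a b) (memS2 c d)
  have memM : MemLp (mE X) 4 P := by
    have h0 : MemLp (fun ω => ∑ i, sampleCov (X ω) i i) 4 P := by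
      have := memLp_finset_sum (μ := P)
        (f := fun (i : Fin pn) ω => sampleCov (X ω) i i) Finset.univ (fun i _ => memS i i)
      simpa using this
    have : mE X = fun ω => ((pn : ℝ))⁻¹ * ∑ i, sampleCov (X ω) i i := funext fun ω => by
      rw [hmE ω]; ring
    rw [this]; exact h0.const_mul _
  have intM : Integrable (mE X) P := memM.integrable (by norm_num)
  have memM2 : MemLp (mE X) 2 P := memM.mono_exponent (by norm_num)
  have intM2 : Integrable (fun ω => mE X ω ^ 2) P := by
    have := integrable_mul22 memM2 memM2
    simpa [pow_two] using this
  -- expectation of the sample covariance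
  have hES : ∀ a b : Fin pn, ∫ ω, sampleCov (X ω) a b ∂P = Sig a b := by
    intro a b
    have hpt : (fun ω => sampleCov (X ω) a b) = fun ω => ((n : ℝ) - 1)⁻¹ *
        ((∑ k, X ω a k * X ω b k) - (∑ k, X ω a k) * (∑ k, X ω b k) / n) :=
      funext fun ω => sampleCov_entry hn0 (X ω) a b
    rw [hpt]
    have hR : Integrable (fun ω => ∑ k, X ω a k * X ω b k) P :=
      integrable_finset_sum _ fun k _ => int_prod2 hL8 a b k k
    have hUVi : Integrable (fun ω => (∑ k, X ω a k) * (∑ k, X ω b k)) P :=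
      (memLp_mul88 (memLp8_sum hL8 a) (memLp8_sum hL8 b)).integrable (by norm_num)
    have hUV : ∫ ω, (∑ k, X ω a k) * (∑ k, X ω b k) ∂P = (n : ℝ) * Sig a b := by
      have hpt2 : (fun ω => (∑ k, X ω a k) * (∑ k, X ω b k))
          = fun ω => ∑ k, ∑ m, X ω a k * X ω b m := funext fun ω => Finset.sum_mul_sum _ _ _ _
      rw [hpt2, integral_finset_sum _ fun k _ =>
        integrable_finset_sum _ fun m _ => int_prod2 hL8 a b k m]
      rw [Finset.sum_congr rfl fun k _ =>
        integral_finset_sum _ fun m _ => int_prod2 hL8 a b k m]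
      have hval : ∀ k m : Fin n, ∫ ω, X ω a k * X ω b m ∂P
          = if k = m then Sig a b else 0 := by
        intro k m; by_cases h : k = m
        · subst h; rw [if_pos rfl]; exact hcov a b k
        · rw [if_neg h]; exact mom2_diff hL8 hmean hindep a b h
      rw [Finset.sum_congr rfl fun k _ => Finset.sum_congr rfl fun m _ => hval k m,
        sum_ite_diag]
      simp [Finset.sum_const, Finset.card_univ]
    rw [integral_const_mul, integral_sub hR (hUVi.div_const _), integral_div, hUV]
    rw [integral_finset_sum _ fun k _ => int_prod2 hL8 a b k k,
      Finset.sum_congr rfl fun k _ => hcov a b k]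
    simp only [Finset.sum_const, Finset.card_univ, Fintype.card_fin, nsmul_eq_mul]
    field_simp
  -- variance expansion
  have hvar : varP P (mE X) = (∫ ω, mE X ω ^ 2 ∂P) - (∫ ω, mE X ω ∂P) ^ 2 := by
    rw [varP]
    have hpt : ∀ ω, (mE X ω - ∫ ω', mE X ω' ∂P) ^ 2
        = mE X ω ^ 2 - (2 * ∫ ω', mE X ω' ∂P) * mE X ω + (∫ ω', mE X ω' ∂P) ^ 2 :=
      fun ω => by ring
    rw [integral_congr_ae (Filter.Eventually.of_forall hpt)]
    have hsub : Integrable (fun ω => mE X ω ^ 2 - (2 * ∫ ω', mE X ω' ∂P) * mE X ω) P :=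
      intM2.sub (intM.const_mul _)
    rw [integral_add hsub (integrable_const _), integral_sub intM2 (intM.const_mul _),
      integral_const_mul, integral_const]
    simp [measure_univ]
    ring
  -- first moment
  have hM1 : ∫ ω, mE X ω ∂P = (∑ i, Sig i i) / pn := by
    have h : mE X = fun ω => (∑ i, sampleCov (X ω) i i) / pn := funext hmE
    rw [h, integral_div, integral_finset_sum _ fun i _ => intS i i,
      Finset.sum_congr rfl fun i _ => hES i i]
  -- second moment of mE
  have hM2 : ∫ ω, mE X ω ^ 2 ∂P
      = (∑ i, ∑ j, ∫ ω, sampleCov (X ω) i i * sampleCov (X ω) j j ∂P) / (pn : ℝ) ^ 2 := by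
    have hpt : ∀ ω, mE X ω ^ 2
        = (∑ i, ∑ j, sampleCov (X ω) i i * sampleCov (X ω) j j) / (pn : ℝ) ^ 2 := by
      intro ω
      rw [hmE ω, div_pow, pow_two, Finset.sum_mul_sum]
    rw [integral_congr_ae (Filter.Eventually.of_forall hpt), integral_div,
      integral_finset_sum _ fun i _ => integrable_finset_sum _ fun j _ => intSS i i j j,
      Finset.sum_congr rfl fun i _ =>
        integral_finset_sum _ fun j _ => intSS i i j j]
  -- expected d2
  have hd2 : ∫ ω, d2E X ω ∂P
      = (∑ i, ∑ j, ∫ ω, sampleCov (X ω) i j * sampleCov (X ω) i j ∂P) / pn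
        - ∫ ω, mE X ω ^ 2 ∂P := by
    have hpt : ∀ ω, d2E X ω
        = (∑ i, ∑ j, sampleCov (X ω) i j * sampleCov (X ω) i j) / pn - mE X ω ^ 2 := by
      intro ω
      have htr : (∑ i, sampleCov (X ω) i i) = pn * mE X ω := by
        rw [hmE ω]; field_simp
      rw [d2E, nrm_sq]
      rw [Finset.sum_congr rfl fun i _ => Finset.sum_congr rfl fun j _ => by
        rw [sub_smul_one_apply]]
      rw [sum_sub_diag_sq, htr]
      rw [Finset.sum_congr rfl fun i _ => Finset.sum_congr rfl fun j _ => (pow_two (sampleCov (X ω) i j))]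
      field_simp
      ring
    rw [integral_congr_ae (Filter.Eventually.of_forall hpt)]
    have hq : Integrable
        (fun ω => (∑ i, ∑ j, sampleCov (X ω) i j * sampleCov (X ω) i j) / pn) P :=
      (integrable_finset_sum _ fun i _ =>
        integrable_finset_sum _ fun j _ => intSS i j i j).div_const _
    rw [integral_sub hq intM2, integral_div,
      integral_finset_sum _ fun i _ => integrable_finset_sum _ fun j _ => intSS i j i j,
      Finset.sum_congr rfl fun i _ =>
        integral_finset_sum _ fun j _ => intSS i j i j]
  -- beta2
  have hbeta : beta2 P X Sig
      = ((∑ i, ∑ j, ∫ ω, sampleCov (X ω) i j * sampleCov (X ω) i j ∂P)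
          - ∑ i, ∑ j, Sig i j * Sig i j) / pn := by
    have hpt : ∀ ω, nrm (sampleCov (X ω) - Sig) ^ 2
        = (∑ i, ∑ j, (sampleCov (X ω) i j - Sig i j) ^ 2) / pn := by
      intro ω
      rw [nrm_sq]
      simp [Matrix.sub_apply]
    rw [beta2, integral_congr_ae (Filter.Eventually.of_forall hpt)]
    have hint : ∀ i j : Fin pn,
        Integrable (fun ω => (sampleCov (X ω) i j - Sig i j) ^ 2) P := by
      intro i j
      have h : (fun ω => (sampleCov (X ω) i j - Sig i j) ^ 2)
          = fun ω => sampleCov (X ω) i j * sampleCov (X ω) i j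
            - (2 * Sig i j) * sampleCov (X ω) i j + Sig i j ^ 2 := funext fun ω => by ring
      rw [h]
      exact ((intSS i j i j).sub ((intS i j).const_mul _)).add (integrable_const _)
    rw [integral_div, integral_finset_sum _ fun i _ =>
      integrable_finset_sum _ fun j _ => hint i j,
      Finset.sum_congr rfl fun i _ => integral_finset_sum _ fun j _ => hint i j]
    have hval : ∀ i j : Fin pn, ∫ ω, (sampleCov (X ω) i j - Sig i j) ^ 2 ∂P
        = (∫ ω, sampleCov (X ω) i j * sampleCov (X ω) i j ∂P) - Sig i j * Sig i j := by
      intro i j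
      have h : (fun ω => (sampleCov (X ω) i j - Sig i j) ^ 2)
          = fun ω => sampleCov (X ω) i j * sampleCov (X ω) i j
            - (2 * Sig i j) * sampleCov (X ω) i j + Sig i j ^ 2 := funext fun ω => by ring
      have ha : Integrable (fun ω => sampleCov (X ω) i j * sampleCov (X ω) i j
          - (2 * Sig i j) * sampleCov (X ω) i j) P :=
        (intSS i j i j).sub ((intS i j).const_mul _)
      have hb : Integrable (fun ω => (2 * Sig i j) * sampleCov (X ω) i j) P :=
        (intS i j).const_mul _
      rw [h, integral_add ha (integrable_const _),
        integral_sub (intSS i j i j) hb, integral_const_mul,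
        integral_const, hES]
      simp [measure_univ]
      ring
    rw [Finset.sum_congr rfl fun i _ => Finset.sum_congr rfl fun j _ => hval i j]
    congr 1
    rw [← Finset.sum_sub_distrib]
    exact Finset.sum_congr rfl fun i _ => Finset.sum_sub_distrib _ _
  -- the core identity, summed
  have hcore : (∑ i, ∑ j, ∫ ω, sampleCov (X ω) i i * sampleCov (X ω) j j ∂P)
        - (∑ i, ∑ j, ∫ ω, sampleCov (X ω) i j * sampleCov (X ω) i j ∂P)
      = (((n : ℝ) - 2) / ((n : ℝ) - 1))
        * ((∑ i, Sig i i) ^ 2 - ∑ i, ∑ j, Sig i j * Sig i j) := by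
    have h1 : ∀ a b : Fin pn,
        (∫ ω, sampleCov (X ω) a a * sampleCov (X ω) b b ∂P)
          - (∫ ω, sampleCov (X ω) a b * sampleCov (X ω) a b ∂P)
        = (((n : ℝ) - 2) / ((n : ℝ) - 1)) * (Sig a a * Sig b b - Sig a b * Sig a b) := by
      intro a b
      rw [← integral_sub (intSS a a b b) (intSS a b a b)]
      exact core_ab hmeas hL8 hmean hcov hindep hn a b
    have h2 : (∑ i, ∑ j, ∫ ω, sampleCov (X ω) i i * sampleCov (X ω) j j ∂P)
          - (∑ i, ∑ j, ∫ ω, sampleCov (X ω) i j * sampleCov (X ω) i j ∂P)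
        = ∑ i, ∑ j, ((∫ ω, sampleCov (X ω) i i * sampleCov (X ω) j j ∂P)
            - ∫ ω, sampleCov (X ω) i j * sampleCov (X ω) i j ∂P) := by
      rw [← Finset.sum_sub_distrib]
      exact Finset.sum_congr rfl fun i _ => (Finset.sum_sub_distrib _ _).symm
    rw [h2, Finset.sum_congr rfl fun i _ => Finset.sum_congr rfl fun j _ => h1 i j]
    have hm3 : (∑ i, ∑ j, (((n : ℝ) - 2) / ((n : ℝ) - 1))
          * (Sig i i * Sig j j - Sig i j * Sig i j))
        = (((n : ℝ) - 2) / ((n : ℝ) - 1))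
          * ((∑ i, Sig i i) ^ 2 - ∑ i, ∑ j, Sig i j * Sig i j) := by
      rw [Finset.sum_congr rfl fun i (_ : i ∈ Finset.univ) => (Finset.mul_sum _ _ _).symm,
        ← Finset.mul_sum]
      congr 1
      rw [Finset.sum_congr rfl fun i (_ : i ∈ Finset.univ) => Finset.sum_sub_distrib _ _,
        Finset.sum_sub_distrib, pow_two, Finset.sum_mul_sum]
    rw [hm3]
  -- final algebra
  have hq12 : 1 - q1 pn n - q2 pn n = ((n : ℝ) - 2) / ((n : ℝ) - 1) := by
    simp only [q1, q2]
    field_simp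
    ring
  set t2 := ∑ i, ∑ j, ∫ ω, sampleCov (X ω) i j * sampleCov (X ω) i j ∂P with ht2def
  set ts2 := ∑ i, ∑ j, ∫ ω, sampleCov (X ω) i i * sampleCov (X ω) j j ∂P with hts2def
  set W := ∑ i, ∑ j, Sig i j * Sig i j with hWdef
  set TrS := ∑ i, Sig i i with hTrSdef
  have hts : ts2 = t2 + (((n : ℝ) - 2) / ((n : ℝ) - 1)) * (TrS ^ 2 - W) := by
    linarith [hcore]
  rw [hvar, hbeta, hd2, hM1, hM2, hq12, hts]
  simp only [q0, q1, q2]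
  field_simp
  ring
end LW
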